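/- arXiv:1412.1761 — 6 statements merged into one kernel-verified Lean document; each statement's English description precedes it below -/
import Mathlib

section
/- The set of generating divided power series of nontrivial binomial-type sequences over a field F forms an abelian group under multiplication: it is closed under products, contains 1, and every element has an inverse whose coefficients are polynomials. -/
/-!
Substituting `x ↦ x + y`, `x ↦ x` and `x ↦ y` coefficientwise are ring homomorphisms
`F[x]{{𝔇}} → F[x,y]{{𝔇}}`, and the Binomial Theorem for `P` says exactly `σ f_P = α f_P · β f_P`.
This multiplicativity survives products (the ring is commutative) and inverses (inverses are unique
and preserved by ring homomorphisms). The inverse exists since `p₀ = 1`: the `𝔇_0`-coefficient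
satisfies `p₀(x+y) = p₀(x) p₀(y)`; putting `y = 0` gives `P = P · (p_n(0))_n`, which forces
`p₀(0) = 1` unless `P = 0`, and then `y = -x` gives `1 = p₀(x) p₀(-x)`, so `p₀` is a unit, hence the constant `p₀(0) = 1`.
-/

open Finset Polynomial

/-- Multiplication in the divided power series ring `R{{𝔇}}`, written coefficientwise:
`(a·b)_n = ∑ C(n,i) a_i b_{n-i}`, corresponding to `𝔇_i·𝔇_j = C(i+j,j) 𝔇_{i+j}`. -/
def dpMul {R : Type*} [CommRing R] (a b : ℕ → R) : ℕ → R :=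
  fun n => ∑ i ∈ Finset.range (n + 1), (n.choose i : R) * a i * b (n - i)

/-- The unit `1 = 𝔇_0` of the divided power series ring. -/
def dpOne (R : Type*) [CommRing R] : ℕ → R := fun n => if n = 0 then 1 else 0

/-- A sequence of polynomials satisfies the Binomial Theorem:
`p_n(x+y) = ∑_{i=0}^n C(n,i) p_i(x) p_{n-i}(y)` in `F[x,y]`. -/
def IsBinomialSeq {F : Type*} [Field F] (p : ℕ → Polynomial F) : Prop :=
  ∀ n : ℕ,
    Polynomial.aeval (MvPolynomial.X 0 + MvPolynomial.X 1 : MvPolynomial (Fin 2) F) (p n) =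
      ∑ i ∈ Finset.range (n + 1), (n.choose i : MvPolynomial (Fin 2) F) *
        Polynomial.aeval (MvPolynomial.X 0 : MvPolynomial (Fin 2) F) (p i) *
        Polynomial.aeval (MvPolynomial.X 1 : MvPolynomial (Fin 2) F) (p (n - i))

section DividedPowerSeries

variable {R : Type*} [CommRing R]

theorem dpMul_apply_zero (a b : ℕ → R) : dpMul a b 0 = a 0 * b 0 := by
  simp [dpMul]

theorem dpMul_comm (a b : ℕ → R) : dpMul a b = dpMul b a := by
  funext n
  rw [dpMul, dpMul, ← sum_range_reflect]
  refine sum_congr rfl fun i hi => ?_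
  have hin : i ≤ n := Nat.lt_succ_iff.mp (mem_range.mp hi)
  rw [add_tsub_cancel_right, Nat.sub_sub_self hin, Nat.choose_symm hin]
  ring

theorem dpMul_dpOne (a : ℕ → R) : dpMul a (dpOne R) = a := by
  funext n
  rw [dpMul, sum_eq_single_of_mem n (self_mem_range_succ n)]
  · simp [dpOne]
  · intro i hi hin
    have : n - i ≠ 0 := by have := mem_range.mp hi; omega
    simp [dpOne, this]

theorem dpOne_dpMul (a : ℕ → R) : dpMul (dpOne R) a = a := by
  rw [dpMul_comm, dpMul_dpOne]

theorem dpMul_assoc (a b c : ℕ → R) : dpMul (dpMul a b) c = dpMul a (dpMul b c) := by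
  funext n
  let f (i j : ℕ) : R := (n.choose i * (n - i).choose j : ℕ) * (a i * b j * c (n - i - j))
  calc dpMul (dpMul a b) c n = ∑ m ∈ range (n + 1), ∑ k ∈ range (m + 1), f k (m - k) := by
        simp only [dpMul, sum_mul, mul_sum]
        refine sum_congr rfl fun m _ => sum_congr rfl fun k hk => ?_
        have hkm : k ≤ m := Nat.lt_succ_iff.mp (mem_range.mp hk)
        simp only [f, Nat.sub_sub_sub_cancel_right hkm, ← Nat.choose_mul hkm]
        push_cast
        ring
    _ = ∑ m ∈ range (n + 1), ∑ k ∈ range (n + 1 - m), f m k := sum_range_diag_flip _ _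
    _ = dpMul a (dpMul b c) n := by
        simp only [dpMul, mul_sum]
        refine sum_congr rfl fun m hm => ?_
        rw [Nat.sub_add_comm (Nat.lt_succ_iff.mp (mem_range.mp hm))]
        refine sum_congr rfl fun k _ => ?_
        simp only [f, Nat.cast_mul, Nat.sub_sub]
        ring

theorem dpMul_mul_mul_comm (a b c d : ℕ → R) :
    dpMul (dpMul a b) (dpMul c d) = dpMul (dpMul a c) (dpMul b d) := by
  rw [dpMul_assoc, ← dpMul_assoc b, dpMul_comm b c, dpMul_assoc c, ← dpMul_assoc]

theorem dpMul_left_inv_eq_right_inv {a b c : ℕ → R} (hba : dpMul b a = dpOne R)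
    (hac : dpMul a c = dpOne R) : b = c := by
  rw [← dpMul_dpOne b, ← hac, ← dpMul_assoc, hba, dpOne_dpMul]

theorem eq_zero_of_eq_dpMul {a c : ℕ → R} (h : a = dpMul a c) (hc : c 0 = 0) : a = 0 := by
  funext n
  induction n using Nat.strong_induction_on with
  | _ n ih =>
    rw [h, dpMul, sum_range_succ, Nat.sub_self, hc, mul_zero, add_zero]
    exact sum_eq_zero fun i hi => by simp [ih i (mem_range.mp hi)]

variable {S T : Type*} [CommRing S] [FunLike T R S] [RingHomClass T R S]

theorem dpMul_map (φ : T) (a b : ℕ → R) : ⇑φ ∘ dpMul a b = dpMul (⇑φ ∘ a) (⇑φ ∘ b) := by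
  funext n
  simp [dpMul, map_sum]

theorem dpOne_map (φ : T) : ⇑φ ∘ dpOne R = dpOne S := by
  funext n
  by_cases h : n = 0 <;> simp [dpOne, h]

end DividedPowerSeries

section Inverse

variable {R : Type*} [CommRing R]

/-- Solves `(dpInv a · a)_{n+1} = 0` for its top term, which is `dpInv a (n+1)` once `a 0 = 1`. -/
def dpInv (a : ℕ → R) : ℕ → R
  | 0 => 1
  | n + 1 => -∑ i : Fin (n + 1), ((n + 1).choose i : R) * dpInv a i * a (n + 1 - i)

theorem dpInv_zero (a : ℕ → R) : dpInv a 0 = 1 := by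
  rw [dpInv]

theorem dpInv_succ (a : ℕ → R) (n : ℕ) :
    dpInv a (n + 1) = -∑ i ∈ range (n + 1), ((n + 1).choose i : R) * dpInv a i * a (n + 1 - i) := by
  rw [dpInv, Fin.sum_univ_eq_sum_range (fun i => ((n + 1).choose i : R) * dpInv a i * a (n + 1 - i))]

theorem dpInv_dpMul_cancel {a : ℕ → R} (ha : a 0 = 1) : dpMul (dpInv a) a = dpOne R := by
  funext n
  cases n with
  | zero => simp [dpMul_apply_zero, dpInv_zero, ha, dpOne]
  | succ n => simp [dpMul, sum_range_succ _ (n + 1), dpInv_succ, ha, dpOne]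

end Inverse

section Binomial

variable {F : Type*} [Field F] {p q : ℕ → F[X]}

theorem isBinomialSeq_iff_comp :
    IsBinomialSeq p ↔
      ⇑(aeval (MvPolynomial.X 0 + MvPolynomial.X 1 : MvPolynomial (Fin 2) F)) ∘ p =
        dpMul (⇑(aeval (MvPolynomial.X 0 : MvPolynomial (Fin 2) F)) ∘ p)
          (⇑(aeval (MvPolynomial.X 1 : MvPolynomial (Fin 2) F)) ∘ p) :=
  funext_iff.symm

theorem IsBinomialSeq.comp_aeval_add {A : Type*} [CommRing A] [Algebra F A]
    (hp : IsBinomialSeq p) (a b : A) :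
    ⇑(aeval (a + b)) ∘ p = dpMul (⇑(aeval a) ∘ p) (⇑(aeval b) ∘ p) := by
  funext n
  have h := congrArg (MvPolynomial.aeval ![a, b]) (hp n)
  simpa [dpMul, map_sum, ← aeval_algHom_apply] using h

theorem IsBinomialSeq.mul (hp : IsBinomialSeq p) (hq : IsBinomialSeq q) :
    IsBinomialSeq (dpMul p q) := by
  rw [isBinomialSeq_iff_comp, dpMul_map, dpMul_map, dpMul_map, hp.comp_aeval_add,
    hq.comp_aeval_add, dpMul_mul_mul_comm]

theorem isBinomialSeq_dpOne : IsBinomialSeq (dpOne F[X]) := by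
  rw [isBinomialSeq_iff_comp, dpOne_map, dpOne_map, dpOne_map, dpMul_dpOne]

theorem IsBinomialSeq.inv (hp : IsBinomialSeq p) (hp0 : p 0 = 1) :
    IsBinomialSeq (dpInv p) := by
  have hinv (a : MvPolynomial (Fin 2) F) :
      dpMul (⇑(aeval a) ∘ dpInv p) (⇑(aeval a) ∘ p) = dpOne _ := by
    rw [← dpMul_map, dpInv_dpMul_cancel hp0, dpOne_map]
  rw [isBinomialSeq_iff_comp]
  refine dpMul_left_inv_eq_right_inv (hinv _) ?_
  rw [hp.comp_aeval_add, dpMul_mul_mul_comm, dpMul_comm _ (⇑(aeval _) ∘ dpInv p), hinv,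
    dpMul_comm _ (⇑(aeval _) ∘ dpInv p), hinv, dpMul_dpOne]

theorem IsBinomialSeq.apply_zero_eq_one (hp : IsBinomialSeq p) (hne : p ≠ 0) : p 0 = 1 := by
  have hsplit : p = dpMul p (⇑(aeval (0 : F[X])) ∘ p) := by
    simpa using hp.comp_aeval_add (X : F[X]) 0
  have hc0 : aeval (0 : F[X]) (p 0) ≠ 0 := fun h0 => hne (eq_zero_of_eq_dpMul hsplit h0)
  have hp0 : p 0 ≠ 0 := fun h0 => hc0 (by rw [h0, map_zero])
  have hc1 : aeval (0 : F[X]) (p 0) = 1 := by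
    have h := congrFun hsplit 0
    rw [dpMul_apply_zero] at h
    exact (mul_right_eq_self₀.mp h.symm).resolve_right hp0
  have hunit : IsUnit (p 0) := by
    have h := congrFun (hp.comp_aeval_add (X : F[X]) (-X)) 0
    rw [add_neg_cancel, dpMul_apply_zero] at h
    simp only [Function.comp_apply, hc1, aeval_X_left, AlgHom.coe_id, id_eq] at h
    exact IsUnit.of_mul_eq_one _ h.symm
  obtain ⟨r, -, hr⟩ := Polynomial.isUnit_iff.mp hunit
  rw [← hr] at hc1 ⊢
  simpa using hc1

end Binomial

/-- The generating series of nontrivial binomial-type sequences form an abelian group under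
multiplication in `F[x]{{𝔇}}`: closed under products, containing `1`, with inverses having
polynomial coefficients. -/
theorem stmt3 {F : Type*} [Field F] :
    (∀ p q : ℕ → Polynomial F, IsBinomialSeq p → (∃ i, p i ≠ 0) →
      IsBinomialSeq q → (∃ i, q i ≠ 0) →
        IsBinomialSeq (dpMul p q) ∧ ∃ i, dpMul p q i ≠ 0) ∧
    (IsBinomialSeq (dpOne (Polynomial F)) ∧ ∃ i, dpOne (Polynomial F) i ≠ 0) ∧
    (∀ p : ℕ → Polynomial F, IsBinomialSeq p → (∃ i, p i ≠ 0) →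
      ∃ g : ℕ → Polynomial F, IsBinomialSeq g ∧ (∃ i, g i ≠ 0) ∧
        ∀ n, dpMul p g n = dpOne (Polynomial F) n) := by
  refine ⟨fun p q hp hpne hq hqne => ⟨hp.mul hq, 0, ?_⟩, ⟨isBinomialSeq_dpOne, 0, by simp [dpOne]⟩,
    fun p hp hpne => ?_⟩
  · rw [dpMul_apply_zero, hp.apply_zero_eq_one (Function.ne_iff.mpr hpne),
      hq.apply_zero_eq_one (Function.ne_iff.mpr hqne), one_mul]
    exact one_ne_zero
  · have hp0 := hp.apply_zero_eq_one (Function.ne_iff.mpr hpne)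
    refine ⟨dpInv p, hp.inv hp0, ⟨0, by simp [dpInv_zero]⟩, fun n => ?_⟩
    rw [dpMul_comm, dpInv_dpMul_cancel hp0]
end

section
/- (Lucas' theorem) Let p be prime, q = p^λ with λ ≥ 1, and let m = Σ m_i q^i, n = Σ n_i q^i be base-q expansions with m ≥ n. Then C(m,n) ≡ Π_i C(m_i, n_i) (mod p). -/
/-!
The base-`q` step `C(a q + b, c q + d) ≡ C(a, c) C(b, d) (mod p)` for digits `b, d < q = p ^ l`
comes from applying the base-`p` Lucas step `l` times: the low `l` base-`p` digits of `a q + b`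
are those of `b`, and the high part is `a`. Induction on the number of base-`q` digits then
gives the product formula.
-/

open Finset

namespace Choose

variable {p : ℕ}

theorem natCast_choose_eq_choose_mod_mul_choose_div [Fact p.Prime] (n k : ℕ) :
    (n.choose k : ZMod p) = (n % p).choose (k % p) * (n / p).choose (k / p) := by
  exact_mod_cast (ZMod.natCast_eq_natCast_iff _ _ _).mpr choose_modEq_choose_mod_mul_choose_div_nat

theorem natCast_choose_mul_pow_add [Fact p.Prime] (a c : ℕ) {l b d : ℕ}
    (hb : b < p ^ l) (hd : d < p ^ l) :
    ((a * p ^ l + b).choose (c * p ^ l + d) : ZMod p) = a.choose c * b.choose d := by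
  induction l generalizing b d with
  | zero => simp_all
  | succ l ih =>
    have hp : 0 < p := Nat.Prime.pos Fact.out
    have split (x y : ℕ) : x * p ^ (l + 1) + y = y + p * (x * p ^ l) := by ring
    rw [natCast_choose_eq_choose_mod_mul_choose_div, split, split, Nat.add_mul_mod_self_left,
      Nat.add_mul_mod_self_left, Nat.add_mul_div_left _ _ hp, Nat.add_mul_div_left _ _ hp,
      add_comm (b / p), add_comm (d / p),
      ih ((Nat.div_lt_iff_lt_mul hp).2 (pow_succ p l ▸ hb))
        ((Nat.div_lt_iff_lt_mul hp).2 (pow_succ p l ▸ hd)),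
      natCast_choose_eq_choose_mod_mul_choose_div b d]
    ring

end Choose

theorem sum_range_succ_mul_pow {R : Type*} [CommSemiring R] (f : ℕ → R) (q : R) (k : ℕ) :
    ∑ i ∈ range (k + 1), f i * q ^ i = (∑ i ∈ range k, f (i + 1) * q ^ i) * q + f 0 := by
  simp only [sum_range_succ', sum_mul, pow_succ, mul_assoc, pow_zero, mul_one]

theorem stmt4_general (p lam q : ℕ) (hp : p.Prime) (hq : q = p ^ lam)
    (k : ℕ) (m n : ℕ → ℕ) (hm : ∀ i, m i < q) (hn : ∀ i, n i < q) :
    (((∑ i ∈ Finset.range k, m i * q ^ i).choose (∑ i ∈ Finset.range k, n i * q ^ i) : ZMod p)) =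
      ∏ i ∈ Finset.range k, ((m i).choose (n i) : ZMod p) := by
  have : Fact p.Prime := ⟨hp⟩
  subst hq
  induction k generalizing m n with
  | zero => simp
  | succ k ih =>
    rw [sum_range_succ_mul_pow m, sum_range_succ_mul_pow n, prod_range_succ',
      Choose.natCast_choose_mul_pow_add _ _ (hm 0) (hn 0),
      ih (fun i => m (i + 1)) (fun i => n (i + 1)) (fun _ => hm _) (fun _ => hn _)]

/-- Lucas' theorem, base `q = p^λ`: if `m = ∑ m_i q^i` and `n = ∑ n_i q^i` with digits `< q`
and `m ≥ n`, then `C(m,n) ≡ ∏_i C(m_i, n_i) (mod p)`. -/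
theorem stmt4 (p lam q : ℕ) (hp : p.Prime) (hl : 1 ≤ lam) (hq : q = p ^ lam)
    (k : ℕ) (m n : ℕ → ℕ) (hm : ∀ i, m i < q) (hn : ∀ i, n i < q)
    (hge : ∑ i ∈ Finset.range k, n i * q ^ i ≤ ∑ i ∈ Finset.range k, m i * q ^ i) :
    (((∑ i ∈ Finset.range k, m i * q ^ i).choose (∑ i ∈ Finset.range k, n i * q ^ i) : ZMod p)) =
      ∏ i ∈ Finset.range k, ((m i).choose (n i) : ZMod p) :=
  stmt4_general p lam q hp hq k m n hm hn
end

section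
/- Let F be a field of characteristic p containing 𝔽_q, q = p^λ, and let E = {e_t(x)} be a sequence of 𝔽_q-linear (additive) polynomials. For i with base-q digits i = Σ_t i_t q^t define p_{E,i}(x) := Π_t e_t(x)^{i_t}. Then the sequence {p_{E,i}} satisfies the binomial identity p_{E,n}(x+y) = Σ_{i=0}^n C(n,i) p_{E,i}(x) p_{E,n-i}(y). -/
open Finset Polynomial

/-- The Carlitz construction: for `i = ∑ i_t q^t` base `q`, `p_{E,i}(x) = ∏_t e_t(x)^{i_t}`. -/
noncomputable def carlitzPoly {F : Type*} [Field F] (q : ℕ) (e : ℕ → Polynomial F) (i : ℕ) : Polynomial F :=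
  ∏ t ∈ Finset.range (i + 1), e t ^ (i / q ^ t % q)

/-- `f` is an `𝔽_q`-linear polynomial: a finite linear combination of the monomials `x^{q^n}`. -/
def IsLinearPoly {F : Type*} [Field F] (q : ℕ) (f : Polynomial F) : Prop :=
  ∃ c : ℕ →₀ F, f = c.sum fun n a => Polynomial.C a * Polynomial.X ^ q ^ n

/-! Since `q` is a power of the characteristic, each `e_t` is additive, so
`p_{E,n}(x + y) = ∏_t (e_t(x) + e_t(y))^{n_t}`. Expanding every factor by the binomial theorem
gives a sum over digit vectors `i_t ≤ n_t` weighted by `∏_t C(n_t, i_t)`, and by Lucas' theorem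
in base `q` this weight is `C(n, i)` mod `p`, which vanishes for the `i ≤ n` whose digits are not
dominated by those of `n`. Inductively, one peels off the lowest base-`q` digit at a time. -/

theorem Choose.choose_modEq_choose_mod_mul_choose_div_pow_nat {p : ℕ} [Fact p.Prime]
    (lam n k : ℕ) :
    n.choose k ≡ (n % p ^ lam).choose (k % p ^ lam) * (n / p ^ lam).choose (k / p ^ lam)
      [MOD p] := by
  induction lam generalizing n k with
  | zero =>
    rw [pow_zero, Nat.mod_one, Nat.mod_one, Nat.div_one, Nat.div_one, Nat.choose_self, one_mul]
  | succ l ih =>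
    have hmod (a : ℕ) : a % p ^ (l + 1) % p = a % p :=
      Nat.mod_mod_of_dvd a (dvd_pow_self p l.succ_ne_zero)
    have hdiv (a : ℕ) : a % p ^ (l + 1) / p = a / p % p ^ l := by
      rw [pow_succ']
      exact Nat.mod_mul_right_div_self a p (p ^ l)
    calc n.choose k
        ≡ (n % p).choose (k % p) * (n / p).choose (k / p) [MOD p] :=
          Choose.choose_modEq_choose_mod_mul_choose_div_nat
      _ ≡ (n % p).choose (k % p) * ((n / p % p ^ l).choose (k / p % p ^ l) *
            (n / p / p ^ l).choose (k / p / p ^ l)) [MOD p] :=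
          Nat.ModEq.mul_left _ (ih _ _)
      _ = (n % p ^ (l + 1) % p).choose (k % p ^ (l + 1) % p) *
            (n % p ^ (l + 1) / p).choose (k % p ^ (l + 1) / p) *
            (n / p ^ (l + 1)).choose (k / p ^ (l + 1)) := by
          rw [hmod, hmod, hdiv, hdiv, Nat.div_div_eq_div_mul, Nat.div_div_eq_div_mul, ← pow_succ']
          ring
      _ ≡ (n % p ^ (l + 1)).choose (k % p ^ (l + 1)) *
            (n / p ^ (l + 1)).choose (k / p ^ (l + 1)) [MOD p] :=
          Nat.ModEq.mul_right _ Choose.choose_modEq_choose_mod_mul_choose_div_nat.symm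

theorem CharP.natCast_choose_eq_choose_mod_mul_choose_div_pow {R : Type*} [CommRing R]
    {p : ℕ} [Fact p.Prime] [CharP R p] (lam n k : ℕ) :
    (n.choose k : R) =
      ((n % p ^ lam).choose (k % p ^ lam) : R) * ((n / p ^ lam).choose (k / p ^ lam) : R) := by
  rw [← Nat.cast_mul, CharP.natCast_eq_natCast R p]
  exact Choose.choose_modEq_choose_mod_mul_choose_div_pow_nat lam n k

theorem IsLinearPoly.aeval_add {F A : Type*} [Field F] [CommRing A] [Algebra F A] {p lam : ℕ}
    [ExpChar A p] {f : F[X]} (hf : IsLinearPoly (p ^ lam) f) (x y : A) :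
    aeval (x + y) f = aeval x f + aeval y f := by
  obtain ⟨c, rfl⟩ := hf
  simp only [Finsupp.sum, map_sum, map_mul, map_pow, aeval_C, aeval_X, ← pow_mul,
    add_pow_expChar_pow, mul_add, sum_add_distrib]

section DigitProd

variable {R : Type*} [CommRing R] {q : ℕ}

theorem dpMul_pow_pow (a b : R) : dpMul (a ^ ·) (b ^ ·) = ((a + b) ^ ·) := by
  funext n
  simp only [dpMul, add_pow]
  exact sum_congr rfl fun i _ => by ring

theorem dpMul_mod_mul_div (hq : 0 < q)
    (hlucas : ∀ n k : ℕ,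
      (n.choose k : R) = ((n % q).choose (k % q) : R) * ((n / q).choose (k / q) : R))
    (u u' v v' : ℕ → R) (n : ℕ) :
    dpMul (fun i => u (i % q) * v (i / q)) (fun i => u' (i % q) * v' (i / q)) n =
      dpMul u u' (n % q) * dpMul v v' (n / q) := by
  have mod_eq {s j : ℕ} (hs : s < q) : (q * j + s) % q = s := by
    rw [Nat.mul_add_mod, Nat.mod_eq_of_lt hs]
  have div_eq {s j : ℕ} (hs : s < q) : (q * j + s) / q = j := by
    rw [Nat.mul_add_div hq, Nat.div_eq_of_lt hs, add_zero]
  have hr : n % q < q := Nat.mod_lt n hq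
  simp only [dpMul, sum_mul_sum, ← sum_product']
  symm
  -- `i = q * j + s` runs over the `i ≤ n` whose digits are dominated by those of `n`;
  -- Lucas' rule kills the other terms.
  refine sum_of_injOn (fun x => q * x.2 + x.1) ?_ ?_ ?_ ?_
  · rintro ⟨s, j⟩ hsj ⟨s', j'⟩ hsj' h
    simp only [coe_product, coe_range, Set.mem_prod, Set.mem_Iio] at hsj hsj' h
    have hs : s < q := by omega
    have hs' : s' < q := by omega
    rw [Prod.mk.injEq]
    exact ⟨by rw [← mod_eq (j := j) hs, h, mod_eq hs'],
      by rw [← div_eq (j := j) hs, h, div_eq hs']⟩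
  · rintro ⟨s, j⟩ hsj
    simp only [coe_product, coe_range, Set.mem_prod, Set.mem_Iio] at hsj ⊢
    have := Nat.mul_le_mul_left q (Nat.lt_succ_iff.mp hsj.2)
    have := Nat.div_add_mod n q
    omega
  · intro i _ hi
    rw [hlucas n i]
    by_cases h : i % q ≤ n % q ∧ i / q ≤ n / q
    · refine absurd ⟨(i % q, i / q), ?_, Nat.div_add_mod i q⟩ hi
      simp only [coe_product, coe_range, Set.mem_prod, Set.mem_Iio]
      omega
    · rcases not_and_or.mp h with h | h <;> simp [Nat.choose_eq_zero_of_lt (not_le.mp h)]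
  · rintro ⟨s, j⟩ hsj
    simp only [mem_product, mem_range] at hsj
    have hs : s < q := by omega
    have hsub : n - (q * j + s) = q * (n / q - j) + (n % q - s) := by
      have := Nat.mul_sub q (n / q) j
      have := Nat.mul_le_mul_left q (Nat.lt_succ_iff.mp hsj.2)
      have := Nat.div_add_mod n q
      omega
    rw [hlucas n, mod_eq hs, div_eq hs, hsub, mod_eq (by omega), div_eq (by omega)]
    ring

def digitProd {M : Type*} [CommMonoid M] (q : ℕ) (a : ℕ → M) (n : ℕ) : M :=
  ∏ t ∈ range (n + 1), a t ^ (n / q ^ t % q)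

theorem digitProd_eq_prod_range {M : Type*} [CommMonoid M] (hq : 2 ≤ q) (a : ℕ → M)
    {n N : ℕ} (h : n < N) :
    digitProd q a n = ∏ t ∈ range N, a t ^ (n / q ^ t % q) := by
  refine prod_subset (range_subset_range.mpr h) fun t _ ht => ?_
  have : n < q ^ t :=
    calc n < t := by simpa using ht
      _ < 2 ^ t := Nat.lt_two_pow_self
      _ ≤ q ^ t := Nat.pow_le_pow_left hq t
  simp [Nat.div_eq_of_lt this]

theorem digitProd_eq_pow_mul {M : Type*} [CommMonoid M] (hq : 2 ≤ q) (a : ℕ → M) (n : ℕ) :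
    digitProd q a n = a 0 ^ (n % q) * digitProd q (fun t => a (t + 1)) (n / q) := by
  rw [digitProd_eq_prod_range hq a (n.lt_succ_self.trans n.succ.lt_succ_self), prod_range_succ',
    digitProd_eq_prod_range hq _ (Nat.lt_succ_of_le (Nat.div_le_self n q)), mul_comm]
  simp [pow_succ', Nat.div_div_eq_div_mul]

theorem digitProd_add (hq : 2 ≤ q)
    (hlucas : ∀ n k : ℕ,
      (n.choose k : R) = ((n % q).choose (k % q) : R) * ((n / q).choose (k / q) : R))
    (a b : ℕ → R) :
    digitProd q (a + b) = dpMul (digitProd q a) (digitProd q b) := by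
  funext n
  induction n using Nat.strong_induction_on generalizing a b with
  | _ n ih =>
  rcases n.eq_zero_or_pos with rfl | hn
  · simp [digitProd, dpMul]
  have hsplit (c : ℕ → R) :
      digitProd q c = fun i => c 0 ^ (i % q) * digitProd q (fun t => c (t + 1)) (i / q) :=
    funext (digitProd_eq_pow_mul hq c)
  rw [hsplit a, hsplit b, dpMul_mod_mul_div (by omega) hlucas, dpMul_pow_pow,
    ← ih _ (Nat.div_lt_self hn (by omega)), digitProd_eq_pow_mul hq]
  rfl

end DigitProd

theorem aeval_carlitzPoly {F A : Type*} [Field F] [CommRing A] [Algebra F A] (q : ℕ)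
    (e : ℕ → F[X]) (z : A) (i : ℕ) :
    aeval z (carlitzPoly q e i) = digitProd q (fun t => aeval z (e t)) i := by
  simp only [carlitzPoly, digitProd, map_prod, map_pow]

/-- The Carlitz construction from a sequence of `𝔽_q`-linear polynomials yields a
binomial-type sequence. -/
theorem stmt7 {F : Type*} [Field F] (p lam q : ℕ) (hp : p.Prime) [CharP F p]
    (hl : 1 ≤ lam) (hq : q = p ^ lam)
    (e : ℕ → Polynomial F) (he : ∀ t, IsLinearPoly q (e t)) :
    IsBinomialSeq (carlitzPoly q e) := by
  subst hq
  have : Fact p.Prime := ⟨hp⟩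
  have hq : 2 ≤ p ^ lam := hp.two_le.trans (Nat.le_self_pow (by omega) p)
  intro n
  simp only [aeval_carlitzPoly, (he _).aeval_add]
  exact congrFun
    (digitProd_add hq (CharP.natCast_choose_eq_choose_mod_mul_choose_div_pow lam) _ _) n
end

section
/- Let F be a field of characteristic p containing 𝔽_q, and let ℓ_q(i) denote the sum of the base-q digits of i. Then the sequence {x^{ℓ_q(i)}}_{i≥0} in F[x] satisfies the binomial identity (x+y)^{ℓ_q(n)} = Σ_{i=0}^n C(n,i) x^{ℓ_q(i)} y^{ℓ_q(n-i)} in F[x,y]. -/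
open Finset Polynomial

/-!
Write `n = b + q m` with `b < q`. In characteristic `p`, Lucas's theorem for the single base-`q`
digit gives `C(b + q m, c + q s) = C(b, c) C(m, s)`, while `ℓ_q(c + q s) = c + ℓ_q(s)` for `c < q`.
So the binomial convolution of `x^{ℓ_q}` and `y^{ℓ_q}` at `n` is the ordinary binomial expansion
of `(x + y)^b` times the same convolution at `m`, and induction on `n` gives `(x + y)^{ℓ_q(n)}`.
-/

theorem Nat.mod_pow_div_pow_mod {p a i : ℕ} (n : ℕ) (hi : i < a) :
    n % p ^ a / p ^ i % p = n / p ^ i % p := by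
  rw [← Nat.pow_sub_mul_pow p hi.le, mul_comm, Nat.mod_mul_right_div_self]
  exact Nat.mod_mod_of_dvd _ (dvd_pow_self p (Nat.sub_ne_zero_of_lt hi))

theorem Choose.choose_modEq_choose_mod_mul_choose_div_pow {p : ℕ} [Fact p.Prime] (a n k : ℕ) :
    n.choose k ≡ (n % p ^ a).choose (k % p ^ a) * (n / p ^ a).choose (k / p ^ a) [ZMOD p] := by
  have hpos : 0 < p ^ a := pow_pos (Fact.out : p.Prime).pos a
  -- the base-`p` digits of `n % p ^ a` are the lowest `a` base-`p` digits of `n`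
  have hlow := Choose.choose_modEq_choose_mul_prod_range_choose (n := n % p ^ a)
    (k := k % p ^ a) (p := p) a
  rw [Nat.div_eq_of_lt (Nat.mod_lt n hpos), Nat.div_eq_of_lt (Nat.mod_lt k hpos),
    Nat.choose_self, Nat.cast_one, one_mul,
    prod_congr rfl fun i hi => by
      rw [Nat.mod_pow_div_pow_mod n (mem_range.1 hi),
        Nat.mod_pow_div_pow_mod k (mem_range.1 hi)]] at hlow
  rw [mul_comm]
  exact (Choose.choose_modEq_choose_mul_prod_range_choose a).trans (hlow.symm.mul_left _)

theorem Nat.cast_choose_add_pow_mul_of_charP {R : Type*} [CommRing R] {p : ℕ} [Fact p.Prime]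
    [CharP R p] {a b c : ℕ} (hb : b < p ^ a) (hc : c < p ^ a) (m s : ℕ) :
    ((b + p ^ a * m).choose (c + p ^ a * s) : R) = b.choose c * m.choose s := by
  have hpos : 0 < p ^ a := pow_pos (Fact.out : p.Prime).pos a
  have h := Choose.choose_modEq_choose_mod_mul_choose_div_pow (p := p) a
    (b + p ^ a * m) (c + p ^ a * s)
  simp only [Nat.add_mul_mod_self_left, Nat.mod_eq_of_lt hb, Nat.mod_eq_of_lt hc,
    Nat.add_mul_div_left _ _ hpos, Nat.div_eq_of_lt hb, Nat.div_eq_of_lt hc, zero_add] at h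
  exact_mod_cast (CharP.intCast_eq_intCast R p).2 h

theorem Nat.digits_sum_add_mul {q c : ℕ} (hq : 1 < q) (hc : c < q) (s : ℕ) :
    (Nat.digits q (c + q * s)).sum = c + (Nat.digits q s).sum := by
  by_cases hcs : c ≠ 0 ∨ s ≠ 0
  · rw [Nat.digits_add q hq c s hc hcs, List.sum_cons]
  · obtain ⟨rfl, rfl⟩ : c = 0 ∧ s = 0 := by tauto
    simp

theorem Nat.injOn_add_mul (q : ℕ) : Set.InjOn (fun z : ℕ × ℕ => z.1 + q * z.2) {z | z.1 < q} := by
  refine Set.LeftInvOn.injOn (f₁' := fun i => (i % q, i / q)) ?_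
  rintro ⟨c, s⟩ (hc : c < q)
  simp [Nat.add_mul_div_left _ _ (c.zero_le.trans_lt hc), Nat.mod_eq_of_lt hc, Nat.div_eq_of_lt hc]

theorem dpMul_add_mul {R : Type*} [CommRing R] {q : ℕ} {f g f' g' u v : ℕ → R}
    (hchoose : ∀ b < q, ∀ c < q, ∀ m s,
      ((b + q * m).choose (c + q * s) : R) = b.choose c * m.choose s)
    (hf : ∀ c < q, ∀ s, f (c + q * s) = u c * f' s)
    (hg : ∀ c < q, ∀ s, g (c + q * s) = v c * g' s) {b : ℕ} (hb : b < q) (m : ℕ) :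
    dpMul f g (b + q * m) = dpMul u v b * dpMul f' g' m := by
  set n := b + q * m
  set D := range (b + 1) ×ˢ range (m + 1)
  let e : ℕ × ℕ → ℕ := fun z => z.1 + q * z.2
  have hsub : D.image e ⊆ range (n + 1) := by
    simp only [subset_iff, mem_image, mem_range, D, mem_product]
    rintro _ ⟨⟨c, s⟩, ⟨hc, hs⟩, rfl⟩
    have : q * s ≤ q * m := Nat.mul_le_mul_left q (by omega)
    simp only [e, n]
    omega
  have hzero : ∀ i ∈ range (n + 1), i ∉ D.image e → (n.choose i : R) * f i * g (n - i) = 0 := by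
    intro i _ hi
    rw [← Nat.mod_add_div i q, hchoose b hb _ (Nat.mod_lt i (by omega))]
    have : ¬ (i % q ≤ b ∧ i / q ≤ m) := fun h =>
      hi (mem_image.2 ⟨(i % q, i / q), by simp [D, h], Nat.mod_add_div i q⟩)
    rcases not_and_or.1 this with h | h <;> simp [Nat.choose_eq_zero_of_lt (not_le.1 h)]
  have hterm : ∀ z ∈ D, (n.choose (e z) : R) * f (e z) * g (n - e z) =
      (b.choose z.1 * u z.1 * v (b - z.1)) * (m.choose z.2 * f' z.2 * g' (m - z.2)) := by
    rintro ⟨c, s⟩ hz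
    simp only [D, mem_product, mem_range] at hz
    have hn : n - e (c, s) = (b - c) + q * (m - s) := by
      have : q * m = q * s + q * (m - s) := by rw [← Nat.mul_add]; congr 1; omega
      simp only [e, n]
      omega
    rw [hn, hchoose b hb c (by omega), hf c (by omega), hg _ (by omega)]
    ring
  have he : Set.InjOn e D := (Nat.injOn_add_mul q).mono fun z hz => by
    simp only [D, coe_product, coe_range, Set.mem_prod, Set.mem_Iio] at hz
    exact show z.1 < q by omega
  calc dpMul f g n = ∑ i ∈ D.image e, (n.choose i : R) * f i * g (n - i) :=
        (sum_subset hsub hzero).symm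
    _ = ∑ z ∈ D, (b.choose z.1 * u z.1 * v (b - z.1)) *
          (m.choose z.2 * f' z.2 * g' (m - z.2)) := by
        rw [sum_image he]
        exact sum_congr rfl hterm
    _ = dpMul u v b * dpMul f' g' m := by
        rw [dpMul, dpMul, sum_mul_sum, sum_product]

theorem dpMul_pow_pow_s8 {R : Type*} [CommRing R] (x y : R) (n : ℕ) :
    dpMul (x ^ ·) (y ^ ·) n = (x + y) ^ n := by
  rw [dpMul, add_pow]
  exact sum_congr rfl fun i _ => by ring

theorem add_pow_digits_sum_eq_dpMul {R : Type*} [CommRing R] {p : ℕ} [hp : Fact p.Prime]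
    [CharP R p] {a : ℕ} (ha : a ≠ 0) (x y : R) (n : ℕ) :
    (x + y) ^ (Nat.digits (p ^ a) n).sum =
      dpMul (fun i => x ^ (Nat.digits (p ^ a) i).sum)
        (fun i => y ^ (Nat.digits (p ^ a) i).sum) n := by
  have hq : 1 < p ^ a := Nat.one_lt_pow ha hp.out.one_lt
  have hsplit : ∀ z : R, ∀ c < p ^ a, ∀ s,
      z ^ (Nat.digits (p ^ a) (c + p ^ a * s)).sum = z ^ c * z ^ (Nat.digits (p ^ a) s).sum :=
    fun z c hc s => by rw [Nat.digits_sum_add_mul hq hc, pow_add]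
  induction n using Nat.strong_induction_on with
  | _ n ih =>
  rcases Nat.eq_zero_or_pos n with rfl | hn
  · simp [dpMul]
  have hb : n % p ^ a < p ^ a := Nat.mod_lt n (by omega)
  rw [← Nat.mod_add_div n (p ^ a), hsplit _ _ hb,
    dpMul_add_mul (fun b hb c hc => Nat.cast_choose_add_pow_mul_of_charP hb hc)
      (hsplit x) (hsplit y) hb,
    ← ih _ (Nat.div_lt_self hn hq), dpMul_pow_pow_s8, mul_comm]

/-- The sequence `{x^{ℓ_q(i)}}`, with `ℓ_q(i)` the base-`q` digit sum, is of binomial type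
in characteristic `p` (`q = p^λ`). -/
theorem stmt8 {F : Type*} [Field F] (p lam q : ℕ) (hp : p.Prime) [CharP F p]
    (hl : 1 ≤ lam) (hq : q = p ^ lam) :
    IsBinomialSeq (fun i => (Polynomial.X : Polynomial F) ^ (Nat.digits q i).sum) := by
  have : Fact p.Prime := ⟨hp⟩
  subst hq
  intro n
  simp only [map_pow, Polynomial.aeval_X]
  exact add_pow_digits_sum_eq_dpMul (by omega) _ _ n
end

section
/- With notation as in the Carlitz construction, let E = {e_t} be a sequence of 𝔽_q-linear polynomials and −E = {−e_t}. Then f_{P_E}(x)·f_{P_{−E}}(x) = 1 in F[x]{{𝔇}}, i.e., the generating series of the Carlitz sequence built from −E is the multiplicative inverse of that built from E. -/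
open Finset Polynomial

/-!
If `p ∤ C(k + l, k)` then, by Kummer's theorem, adding `k` and `l` in base `p`, hence in base
`q = p ^ λ`, produces no carries, so the base-`q` digits of `k` and `l` add up to those of `k + l`
and `p_{E,k} p_{E,l} = p_{E,k+l}`. Moreover `p_{-E,l} = (-1)^{s_q(l)} p_{E,l} = (-1)^l p_{E,l}`,
because `(-1)^{q^t} = -1` in characteristic `p`. Hence the `n`-th coefficient of
`f_{P_E} f_{P_{-E}}` is `∑_k C(n,k) (-1)^{n-k} p_{E,n} = (1 - 1)^n p_{E,n}`.
-/

namespace Nat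

theorem mod_pow_add_mod_pow_lt_of_not_dvd_choose {p k l : ℕ} (hp : p.Prime)
    (h : ¬ p ∣ (k + l).choose k) (s : ℕ) : k % p ^ s + l % p ^ s < p ^ s := by
  rcases s.eq_zero_or_pos with rfl | hs
  · simp [Nat.mod_one]
  by_contra! hcarry
  set b := max (s + 1) (log p (l + k) + 1)
  have hcarries := hp.emultiplicity_choose' (n := l) (k := k) (b := b) (by omega)
  rw [add_comm l k, emultiplicity_eq_zero.2 h, eq_comm, Nat.cast_eq_zero,
    Finset.card_eq_zero] at hcarries
  have hs_mem : s ∈ ({i ∈ Ico 1 b | p ^ i ≤ k % p ^ i + l % p ^ i} : Finset ℕ) :=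
    mem_filter.2 ⟨mem_Ico.2 ⟨hs, by omega⟩, hcarry⟩
  simp [hcarries] at hs_mem

theorem div_pow_mod_add_div_pow_mod {b k l : ℕ} (h : ∀ s, k % b ^ s + l % b ^ s < b ^ s)
    (t : ℕ) : k / b ^ t % b + l / b ^ t % b = (k + l) / b ^ t % b := by
  have hmod : ∀ s, (k + l) % b ^ s = k % b ^ s + l % b ^ s := fun s => by
    rw [Nat.add_mod, Nat.mod_eq_of_lt (h s)]
  have hpos : 0 < b ^ t := (Nat.zero_le _).trans_lt (h t)
  have hsucc := hmod (t + 1)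
  simp only [Nat.mod_pow_succ, hmod t] at hsucc
  exact (Nat.eq_of_mul_eq_mul_left hpos (by linarith)).symm

end Nat

section Carlitz

variable {F : Type*} [Field F] {q : ℕ}

theorem carlitzPoly_eq_prod_range (hq : 1 < q) (e : ℕ → F[X]) {m N : ℕ} (h : m ≤ N) :
    carlitzPoly q e m = ∏ t ∈ range (N + 1), e t ^ (m / q ^ t % q) := by
  refine prod_subset (range_subset_range.2 (by omega)) fun t _ ht => ?_
  have hm : m < q ^ t := (show m ≤ t by rw [mem_range] at ht; omega).trans_lt (Nat.lt_pow_self hq)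
  rw [Nat.div_eq_of_lt hm, Nat.zero_mod, pow_zero]

theorem carlitzPoly_mul_of_digits_add (hq : 1 < q) (e : ℕ → F[X]) {k l : ℕ}
    (h : ∀ t, k / q ^ t % q + l / q ^ t % q = (k + l) / q ^ t % q) :
    carlitzPoly q e k * carlitzPoly q e l = carlitzPoly q e (k + l) := by
  rw [carlitzPoly_eq_prod_range hq e (Nat.le_add_right k l),
    carlitzPoly_eq_prod_range hq e (Nat.le_add_left l k),
    carlitzPoly_eq_prod_range hq e le_rfl, ← prod_mul_distrib]
  exact prod_congr rfl fun t _ => by rw [← pow_add, h]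

theorem carlitzPoly_neg (e : ℕ → F[X]) (j : ℕ) :
    carlitzPoly q (fun t => -e t) j =
      (-1) ^ (∑ t ∈ range (j + 1), j / q ^ t % q) * carlitzPoly q e j := by
  simp only [carlitzPoly, neg_pow (e _), prod_mul_distrib, prod_pow_eq_pow_sum]

theorem neg_one_pow_sum_digits {R : Type*} [Monoid R] [HasDistribNeg R]
    (hq : (-1 : R) ^ q = -1) (j N : ℕ) :
    (-1 : R) ^ (∑ t ∈ range N, j / q ^ t % q) = (-1) ^ (j % q ^ N) := by
  have hpow : ∀ t, (-1 : R) ^ q ^ t = -1 := fun t => by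
    induction t with
    | zero => simp
    | succ t ih => rw [pow_succ, pow_mul, ih, hq]
  induction N with
  | zero => simp [Nat.mod_one]
  | succ N ih => rw [sum_range_succ, pow_add, ih, Nat.mod_pow_succ, pow_add, pow_mul, hpow]

theorem carlitzPoly_neg_eq_neg_one_pow_mul (hq : 1 < q) (hneg : (-1 : F[X]) ^ q = -1)
    (e : ℕ → F[X]) (j : ℕ) :
    carlitzPoly q (fun t => -e t) j = (-1) ^ j * carlitzPoly q e j := by
  rw [carlitzPoly_neg, neg_one_pow_sum_digits hneg,
    Nat.mod_eq_of_lt (j.lt_succ_self.trans (Nat.lt_pow_self hq))]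

theorem choose_mul_carlitzPoly_mul_carlitzPoly_neg {p lam : ℕ} (hp : p.Prime) [CharP F p]
    (hq : q = p ^ lam) (hq1 : 1 < q) (e : ℕ → F[X]) (k l : ℕ) :
    ((k + l).choose k : F[X]) * carlitzPoly q e k * carlitzPoly q (fun t => -e t) l =
      (-1) ^ l * ((k + l).choose k : F[X]) * carlitzPoly q e (k + l) := by
  by_cases hdvd : p ∣ (k + l).choose k
  · simp [(CharP.cast_eq_zero_iff F[X] p _).2 hdvd]
  have : Fact p.Prime := ⟨hp⟩
  have hneg : (-1 : F[X]) ^ q = -1 := hq ▸ neg_one_pow_char_pow _ p lam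
  have hcarry : ∀ t, k % q ^ t + l % q ^ t < q ^ t := fun t => by
    rw [hq, ← pow_mul]
    exact Nat.mod_pow_add_mod_pow_lt_of_not_dvd_choose hp hdvd _
  rw [carlitzPoly_neg_eq_neg_one_pow_mul hq1 hneg,
    ← carlitzPoly_mul_of_digits_add hq1 e (Nat.div_pow_mod_add_div_pow_mod hcarry)]
  ring

end Carlitz

theorem stmt11_general {F : Type*} [Field F] (p lam q : ℕ) (hp : p.Prime) [CharP F p]
    (hl : 1 ≤ lam) (hq : q = p ^ lam)
    (e : ℕ → Polynomial F) :
    ∀ n, dpMul (carlitzPoly q e) (carlitzPoly q fun t => -(e t)) n =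
      dpOne (Polynomial F) n := by
  intro n
  have hq1 : 1 < q := hq ▸ Nat.one_lt_pow (by omega) hp.one_lt
  rcases n.eq_zero_or_pos with rfl | hn
  · simp [dpMul, dpOne, carlitzPoly]
  have hterm : ∀ i ∈ range (n + 1),
      (n.choose i : F[X]) * carlitzPoly q e i * carlitzPoly q (fun t => -e t) (n - i) =
        1 ^ i * (-1) ^ (n - i) * n.choose i * carlitzPoly q e n := fun i hi => by
    obtain ⟨l, rfl⟩ := Nat.exists_eq_add_of_le (mem_range_succ_iff.1 hi)
    rw [Nat.add_sub_cancel_left, choose_mul_carlitzPoly_mul_carlitzPoly_neg hp hq hq1, one_pow,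
      one_mul]
  rw [dpMul, dpOne, if_neg hn.ne', sum_congr rfl hterm, ← sum_mul, ← add_pow, add_neg_cancel,
    zero_pow hn.ne', zero_mul]

/-- The Carlitz generating series of `-E` is the multiplicative inverse of that of `E`:
`f_{P_E} · f_{P_{-E}} = 1` in `F[x]{{𝔇}}`. -/
theorem stmt11 {F : Type*} [Field F] (p lam q : ℕ) (hp : p.Prime) [CharP F p]
    (hl : 1 ≤ lam) (hq : q = p ^ lam)
    (e : ℕ → Polynomial F) (he : ∀ t, IsLinearPoly q (e t)) :
    ∀ n, dpMul (carlitzPoly q e) (carlitzPoly q fun t => -(e t)) n =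
      dpOne (Polynomial F) n :=
  stmt11_general p lam q hp hl hq e
end

section
/- Let σ be a permutation of ℕ and define σ_*: ℕ → ℕ on base-q expansions by σ_*(Σ_i y_i q^i) = Σ_i y_i q^{σ(i)}. Then in characteristic p (q a power of p), the map Σ a_j 𝔇_j ↦ Σ a_j 𝔇_{σ_* j} is a ring automorphism of R{{𝔇}}; in particular C(σ_* m + σ_* n, σ_* n) ≡ C(m+n, n) (mod p) whenever the base-q additions m + n and σ_* m + σ_* n are compatible via Lucas. -/
/-!
Lucas' theorem in base `q = p ^ λ` gives `C(m + n, n) ≡ ∏ᵢ C(mᵢ + nᵢ, nᵢ) (mod p)`, and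
a factor vanishes whenever position `i` carries. The map `σ_*` permutes the base-`q` digits,
hence permutes the factors of this product, which gives the congruence. It is also additive on
carry-free pairs, and only carry-free pairs `(i, j - i)` contribute to the coefficient of `𝔇_j`
in a product, so reindexing that sum by `σ_*` shows that `σ_*` respects multiplication.
-/

open Finset Polynomial

/-- The digit-permutation map `σ_* (∑ y_i q^i) = ∑ y_i q^{σ(i)}`. -/
def sigmaStar (q : ℕ) (sig : Equiv.Perm ℕ) (n : ℕ) : ℕ :=
  ∑ i ∈ Finset.range (n + 1), (n / q ^ i % q) * q ^ sig i

def digit (q i n : ℕ) : ℕ := n / q ^ i % q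

def CarryFree (q m n : ℕ) : Prop := ∀ i, digit q i m + digit q i n < q

section Digits

variable {q : ℕ}

lemma digit_lt (hq : 0 < q) (i n : ℕ) : digit q i n < q := Nat.mod_lt _ hq

lemma digit_zero (n : ℕ) : digit q 0 n = n % q := by
  simp [digit]

lemma digit_eq_zero_of_lt {i n : ℕ} (h : n < q ^ i) : digit q i n = 0 := by
  simp [digit, Nat.div_eq_of_lt h]

lemma digit_eq_zero_of_lt_index (hq : 1 < q) {i n : ℕ} (h : n < i) : digit q i n = 0 :=
  digit_eq_zero_of_lt (h.trans (Nat.lt_pow_self hq))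

lemma sum_digit_mul_pow (n N : ℕ) : ∑ i ∈ range N, digit q i n * q ^ i = n % q ^ N := by
  induction N with
  | zero => simp [Nat.mod_one]
  | succ N ih => rw [sum_range_succ, ih, Nat.mod_pow_succ, digit, mul_comm]

lemma sum_mul_pow_lt {g : ℕ → ℕ} (hg : ∀ i, g i < q) (N : ℕ) :
    ∑ i ∈ range N, g i * q ^ i < q ^ N := by
  induction N with
  | zero => simp
  | succ N ih =>
    rw [sum_range_succ, pow_succ]
    nlinarith [hg N, pow_pos (Nat.zero_lt_of_lt (hg 0)) N]

lemma digit_add_pow_mul_of_lt {a c j N : ℕ} (ha : a < q ^ N) (hj : j < N) :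
    digit q j (a + q ^ N * c) = digit q j a := by
  have hq : 0 < q := Nat.pos_of_ne_zero fun h => by
    simp [h, zero_pow (by omega : N ≠ 0)] at ha
  obtain ⟨r, rfl⟩ := Nat.exists_eq_add_of_lt hj
  rw [digit, digit, show q ^ (j + r + 1) * c = q ^ j * (q * (q ^ r * c)) by ring,
    Nat.add_mul_div_left _ _ (pow_pos hq j), Nat.add_mul_mod_self_left]

lemma digit_add_pow_mul_self {a c N : ℕ} (ha : a < q ^ N) :
    digit q N (a + q ^ N * c) = c % q := by
  rw [digit, Nat.add_mul_div_left _ _ (by omega), Nat.div_eq_of_lt ha, zero_add]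

lemma digit_sum_mul_pow {g : ℕ → ℕ} (hg : ∀ i, g i < q) (N j : ℕ) :
    digit q j (∑ i ∈ range N, g i * q ^ i) = if j < N then g j else 0 := by
  induction N with
  | zero => simp [digit]
  | succ N ih =>
    have hlt := sum_mul_pow_lt hg N
    rw [sum_range_succ, mul_comm (g N)]
    rcases lt_trichotomy j N with hj | rfl | hj
    · rw [digit_add_pow_mul_of_lt hlt hj, ih, if_pos hj, if_pos (by omega)]
    · rw [digit_add_pow_mul_self hlt, Nat.mod_eq_of_lt (hg j), if_pos (by omega)]
    · rw [if_neg (by omega), digit_eq_zero_of_lt]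
      calc _ < q ^ (N + 1) := by
            rw [← mul_comm (g N), ← sum_range_succ]; exact sum_mul_pow_lt hg _
        _ ≤ q ^ j := Nat.pow_le_pow_right (Nat.zero_lt_of_lt (hg 0)) hj

lemma eq_of_digit_eq (hq : 1 < q) {m n : ℕ} (h : ∀ i, digit q i m = digit q i n) : m = n := by
  have hm : m < q ^ (m + n) := (Nat.lt_pow_self hq).trans_le' (by omega)
  have hn : n < q ^ (m + n) := (Nat.lt_pow_self hq).trans_le' (by omega)
  calc m = ∑ i ∈ range (m + n), digit q i m * q ^ i := by
        rw [sum_digit_mul_pow, Nat.mod_eq_of_lt hm]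
    _ = ∑ i ∈ range (m + n), digit q i n * q ^ i := sum_congr rfl fun i _ => by rw [h i]
    _ = n := by rw [sum_digit_mul_pow, Nat.mod_eq_of_lt hn]

end Digits

section SigmaStar

variable {q : ℕ} (hq : 1 < q) (sig : Equiv.Perm ℕ)
include hq

lemma sigmaStar_eq_sum_range {n N : ℕ} (hN : ∀ i ≤ n, sig i < N) :
    sigmaStar q sig n = ∑ j ∈ range N, digit q (sig.symm j) n * q ^ j := by
  have himage : (range (n + 1)).image sig ⊆ range N := by
    simpa [subset_iff, Nat.lt_succ_iff] using hN
  rw [← sum_subset himage fun j _ hj => ?_, sum_image fun _ _ _ _ h => sig.injective h]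
  · exact sum_congr rfl fun i _ => by rw [Equiv.symm_apply_apply, digit]
  · rw [digit_eq_zero_of_lt_index hq, zero_mul]
    by_contra! hle
    exact hj (mem_image.2 ⟨sig.symm j, mem_range.2 (by omega), sig.apply_symm_apply j⟩)

lemma digit_sigmaStar (n j : ℕ) : digit q j (sigmaStar q sig n) = digit q (sig.symm j) n := by
  set M := (range (n + 1)).sup sig
  have hM : ∀ i ≤ n, sig i < M + j + 1 := fun i hi => by
    have := le_sup (f := sig) (mem_range.2 (show i < n + 1 by omega))
    omega
  rw [sigmaStar_eq_sum_range hq sig hM, digit_sum_mul_pow (fun _ => digit_lt (by omega) _ _),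
    if_pos (by omega)]

lemma sigmaStar_symm_sigmaStar (n : ℕ) : sigmaStar q sig.symm (sigmaStar q sig n) = n :=
  eq_of_digit_eq hq fun i => by
    rw [digit_sigmaStar hq, digit_sigmaStar hq, Equiv.symm_symm, Equiv.symm_apply_apply]

lemma sigmaStar_sigmaStar_symm (n : ℕ) : sigmaStar q sig (sigmaStar q sig.symm n) = n := by
  simpa using sigmaStar_symm_sigmaStar hq sig.symm n

lemma sigmaStar_bijective : Function.Bijective (sigmaStar q sig) :=
  Function.bijective_iff_has_inverse.2 ⟨sigmaStar q sig.symm,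
    sigmaStar_symm_sigmaStar hq sig, sigmaStar_sigmaStar_symm hq sig⟩

lemma digit_add_of_carryFree {m n : ℕ} (h : CarryFree q m n) (i : ℕ) :
    digit q i (m + n) = digit q i m + digit q i n := by
  have hsum : m + n = ∑ t ∈ range (m + n + i + 1), (digit q t m + digit q t n) * q ^ t := by
    simp only [add_mul, sum_add_distrib, sum_digit_mul_pow]
    rw [Nat.mod_eq_of_lt, Nat.mod_eq_of_lt] <;> exact (Nat.lt_pow_self hq).trans_le' (by omega)
  rw [hsum, digit_sum_mul_pow h, if_pos (by omega)]

lemma carryFree_sigmaStar_iff {m n : ℕ} :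
    CarryFree q (sigmaStar q sig m) (sigmaStar q sig n) ↔ CarryFree q m n := by
  simp only [CarryFree, digit_sigmaStar hq]
  exact (sig.forall_congr_left (p := fun i => digit q i m + digit q i n < q)).symm

lemma sigmaStar_add_of_carryFree {m n : ℕ} (h : CarryFree q m n) :
    sigmaStar q sig (m + n) = sigmaStar q sig m + sigmaStar q sig n := by
  have h' := (carryFree_sigmaStar_iff hq sig).2 h
  refine eq_of_digit_eq hq fun i => ?_
  rw [digit_add_of_carryFree hq h', digit_sigmaStar hq, digit_sigmaStar hq, digit_sigmaStar hq,
    digit_add_of_carryFree hq h]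

end SigmaStar

section Lucas

variable {p : ℕ} [Fact p.Prime]

lemma choose_eq_choose_mod_pow_mul_choose_div_pow (k n m : ℕ) :
    (n.choose m : ZMod p) =
      (n % p ^ k).choose (m % p ^ k) * (n / p ^ k).choose (m / p ^ k) := by
  induction k generalizing n m with
  | zero => simp [Nat.mod_one]
  | succ k ih =>
    have lucas (n m : ℕ) :
        (n.choose m : ZMod p) = (n % p).choose (m % p) * (n / p).choose (m / p) := by
      exact_mod_cast (ZMod.natCast_eq_natCast_iff _ _ _).2
        Choose.choose_modEq_choose_mod_mul_choose_div_nat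
    rw [pow_succ', lucas n m, ih (n / p) (m / p), lucas (n % (p * p ^ k)),
      Nat.mod_mul_right_mod, Nat.mod_mul_right_mod, Nat.mod_mul_right_div_self,
      Nat.mod_mul_right_div_self, Nat.div_div_eq_div_mul, Nat.div_div_eq_div_mul, mul_assoc]

lemma choose_eq_zero_of_mod_pow_lt {k n m : ℕ} (h : n % p ^ k < m % p ^ k) :
    (n.choose m : ZMod p) = 0 := by
  rw [choose_eq_choose_mod_pow_mul_choose_div_pow k, Nat.choose_eq_zero_of_lt h, Nat.cast_zero,
    zero_mul]

lemma choose_add_eq_prod_range (k N : ℕ) {m n : ℕ} (hm : m < (p ^ k) ^ N)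
    (hn : n < (p ^ k) ^ N) :
    ((m + n).choose n : ZMod p) = ∏ i ∈ range N,
      ((digit (p ^ k) i m + digit (p ^ k) i n).choose (digit (p ^ k) i n) : ZMod p) := by
  set q := p ^ k
  have hq : 0 < q := pow_pos (Fact.out : p.Prime).pos k
  induction N generalizing m n with
  | zero => simp_all
  | succ N ih =>
    have digit_succ (x i : ℕ) : digit q (i + 1) x = digit q i (x / q) := by
      rw [digit, digit, Nat.div_div_eq_div_mul, pow_succ']
    rw [choose_eq_choose_mod_pow_mul_choose_div_pow k, prod_range_succ']
    simp only [digit_succ, digit_zero]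
    have := Nat.mod_lt m hq
    have := Nat.mod_lt n hq
    by_cases hc : m % q + n % q < q
    · rw [Nat.add_div hq, if_neg (by omega), add_zero, Nat.add_mod, Nat.mod_eq_of_lt hc,
        ih (Nat.div_lt_of_lt_mul (by rwa [← pow_succ']))
          (Nat.div_lt_of_lt_mul (by rwa [← pow_succ'])), mul_comm]
    · have hlt : (m + n) % q < n % q := by
        rw [Nat.add_mod, Nat.mod_eq_sub_mod (by omega), Nat.mod_eq_of_lt (by omega)]
        omega
      have hcarry : ((m % q + n % q).choose (n % q) : ZMod p) = 0 :=
        choose_eq_zero_of_mod_pow_lt (by rwa [← Nat.add_mod, Nat.mod_mod])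
      rw [Nat.choose_eq_zero_of_lt hlt, hcarry, Nat.cast_zero, zero_mul, mul_zero]

end Lucas

section PrimePowerBase

variable {p k : ℕ} [Fact p.Prime] (hk : 0 < k)
include hk

lemma one_lt_prime_pow : 1 < p ^ k := Nat.one_lt_pow hk.ne' (Fact.out : p.Prime).one_lt

lemma choose_add_eq_finprod (m n : ℕ) :
    ((m + n).choose n : ZMod p) = ∏ᶠ i,
      ((digit (p ^ k) i m + digit (p ^ k) i n).choose (digit (p ^ k) i n) : ZMod p) := by
  have hq := one_lt_prime_pow (p := p) hk
  have hlt {x : ℕ} (hx : x ≤ m + n) : x < (p ^ k) ^ (m + n + 1) :=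
    (Nat.lt_pow_self hq).trans_le' (by omega)
  rw [finprod_eq_prod_of_mulSupport_subset _ (s := range (m + n + 1)) fun i hi => ?_,
    choose_add_eq_prod_range k _ (hlt (by omega)) (hlt (by omega))]
  by_contra hi'
  have hlarge : m + n < i := by simpa using hi'
  apply hi
  rw [digit_eq_zero_of_lt_index hq (n := m) (by omega),
    digit_eq_zero_of_lt_index hq (n := n) (by omega)]
  simp

lemma choose_add_eq_zero_of_not_carryFree {m n : ℕ} (h : ¬CarryFree (p ^ k) m n) :
    ((m + n).choose n : ZMod p) = 0 := by
  have hq := one_lt_prime_pow (p := p) hk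
  obtain ⟨i, hi⟩ : ∃ i, p ^ k ≤ digit (p ^ k) i m + digit (p ^ k) i n := by
    simpa [CarryFree] using h
  have hlt {x : ℕ} (hx : x ≤ m + n + i) : x < (p ^ k) ^ (m + n + i + 1) :=
    (Nat.lt_pow_self hq).trans_le' (by omega)
  rw [choose_add_eq_prod_range k _ (hlt (by omega)) (hlt (by omega))]
  refine prod_eq_zero (mem_range.2 (by omega : i < m + n + i + 1))
    (choose_eq_zero_of_mod_pow_lt (k := k) ?_)
  have := digit_lt (q := p ^ k) (by omega) i m
  have := digit_lt (q := p ^ k) (by omega) i n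
  rw [Nat.mod_eq_sub_mod hi, Nat.mod_eq_of_lt (by omega), Nat.mod_eq_of_lt (by omega)]
  omega

lemma choose_sigmaStar_add (sig : Equiv.Perm ℕ) (m n : ℕ) :
    ((sigmaStar (p ^ k) sig m + sigmaStar (p ^ k) sig n).choose (sigmaStar (p ^ k) sig n) :
      ZMod p) = ((m + n).choose n : ZMod p) := by
  rw [choose_add_eq_finprod hk, choose_add_eq_finprod hk]
  simp only [digit_sigmaStar (one_lt_prime_pow hk)]
  exact finprod_comp_equiv sig.symm
    (f := fun i => ((digit (p ^ k) i m + digit (p ^ k) i n).choose (digit (p ^ k) i n) : ZMod p))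

end PrimePowerBase

section DividedPowers

variable {R : Type*} [CommRing R] {p k : ℕ} [Fact p.Prime] [CharP R p] (hk : 0 < k)
include hk

open Classical in
lemma dpMul_eq_sum_carryFree (a b : ℕ → R) (n : ℕ) :
    dpMul a b n = ∑ x ∈ antidiagonal n with CarryFree (p ^ k) x.1 x.2,
      (n.choose x.1 : R) * (a x.1 * b x.2) := by
  rw [sum_filter_of_ne fun x hx hne => ?_, Nat.sum_antidiagonal_eq_sum_range_succ_mk]
  · simp only [dpMul, mul_assoc]
  · by_contra hcf
    apply hne
    have hchoose : (n.choose x.1 : R) = 0 := by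
      rw [CharP.cast_eq_zero_iff R p, ← ZMod.natCast_eq_zero_iff,
        ← HasAntidiagonal.mem_antidiagonal.1 hx, Nat.choose_symm_add]
      exact choose_add_eq_zero_of_not_carryFree hk hcf
    rw [hchoose, zero_mul]

lemma dpMul_sigmaStar (sig : Equiv.Perm ℕ) {a b ta tb : ℕ → R}
    (ha : ∀ j, ta (sigmaStar (p ^ k) sig j) = a j)
    (hb : ∀ j, tb (sigmaStar (p ^ k) sig j) = b j) (n : ℕ) :
    dpMul ta tb (sigmaStar (p ^ k) sig n) = dpMul a b n := by
  have hq := one_lt_prime_pow (p := p) hk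
  set σ := sigmaStar (p ^ k) sig
  set τ := sigmaStar (p ^ k) sig.symm
  rw [dpMul_eq_sum_carryFree hk, dpMul_eq_sum_carryFree hk]
  symm
  refine sum_nbij' (Prod.map σ σ) (Prod.map τ τ) ?_ ?_ ?_ ?_ ?_
  · rintro ⟨i, j⟩ hx
    simp only [mem_filter, HasAntidiagonal.mem_antidiagonal, Prod.map_fst, Prod.map_snd] at hx ⊢
    obtain ⟨rfl, hcf⟩ := hx
    exact ⟨(sigmaStar_add_of_carryFree hq sig hcf).symm, (carryFree_sigmaStar_iff hq sig).2 hcf⟩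
  · rintro ⟨i, j⟩ hx
    simp only [mem_filter, HasAntidiagonal.mem_antidiagonal, Prod.map_fst, Prod.map_snd] at hx ⊢
    obtain ⟨hsum, hcf⟩ := hx
    refine ⟨?_, (carryFree_sigmaStar_iff hq sig.symm).2 hcf⟩
    rw [← sigmaStar_add_of_carryFree hq sig.symm hcf, hsum, sigmaStar_symm_sigmaStar hq]
  · rintro ⟨i, j⟩ -
    simp [σ, τ, sigmaStar_symm_sigmaStar hq]
  · rintro ⟨i, j⟩ -
    simp [σ, τ, sigmaStar_sigmaStar_symm hq]
  · rintro ⟨i, j⟩ hx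
    simp only [mem_filter, HasAntidiagonal.mem_antidiagonal] at hx
    obtain ⟨rfl, hcf⟩ := hx
    simp only [Prod.map_fst, Prod.map_snd, ha, hb, σ, sigmaStar_add_of_carryFree hq sig hcf]
    congr 1
    refine (CharP.natCast_eq_natCast R p).2 ((ZMod.natCast_eq_natCast_iff _ _ _).1 ?_)
    rw [add_comm i, add_comm (sigmaStar _ sig i)]
    exact (choose_sigmaStar_add hk sig j i).symm

end DividedPowers

/-- In characteristic `p` (`q = p^λ`), `σ_*` is a bijection of `ℕ`, satisfies
`C(σ_* m + σ_* n, σ_* n) ≡ C(m + n, n) (mod p)`, and induces a ring automorphism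
`∑ a_j 𝔇_j ↦ ∑ a_j 𝔇_{σ_* j}` of `R{{𝔇}}`. -/
theorem stmt17 {R : Type*} [CommRing R] (p lam q : ℕ) (hp : p.Prime) [CharP R p]
    (hl : 1 ≤ lam) (hq : q = p ^ lam) (sig : Equiv.Perm ℕ) :
    Function.Bijective (sigmaStar q sig) ∧
    (∀ m n : ℕ,
      (((sigmaStar q sig m + sigmaStar q sig n).choose (sigmaStar q sig n) : ZMod p)) =
        (((m + n).choose n : ZMod p))) ∧
    (∀ a b ta tb tc : ℕ → R,
      (∀ j, ta (sigmaStar q sig j) = a j) →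
      (∀ j, tb (sigmaStar q sig j) = b j) →
      (∀ j, tc (sigmaStar q sig j) = dpMul a b j) →
      ∀ n, tc n = dpMul ta tb n) := by
  subst hq
  have : Fact p.Prime := ⟨hp⟩
  have hbij := sigmaStar_bijective (one_lt_prime_pow (p := p) hl) sig
  refine ⟨hbij, choose_sigmaStar_add hl sig, fun a b ta tb tc ha hb hc n => ?_⟩
  obtain ⟨j, rfl⟩ := hbij.2 n
  rw [hc, dpMul_sigmaStar hl sig ha hb]
end
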